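/- Let H be a graph on {x_1,...,x_n} and G = H* its whisker graph with cover ideal J(G) ⊂ S = K[x_1,...,x_n,y_1,...,y_n]. Order the minimal generators of J(G)^N decreasingly by the lexicographic order induced by x_1 > y_1 > x_2 > y_2 > ⋯ > x_n > y_n. Then for every generator u of J(G)^N, the colon ideal (v : v a generator of J(G)^N with v >_lex u) : (u) is generated by a subset of the variables {x_1,...,x_n}; in particular J(G)^N has linear quotients for every N ≥ 1. -/

import Mathlib

/-!
The minimal vertex covers of `H*` are the sets `{x_i | i ∈ A} ∪ {y_i | i ∉ A}` for the vertex
covers `A` of `H`, so the minimal generators of `J(G)^N` are the sums of `N` such 0/1 exponent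
vectors; they all have degree `nN` and satisfy `w(x_i) + w(y_i) = N`. If `w >_lex u`, the first
variable where they differ is some `x_i` (at `y_i` they would already agree), so
`u(x_i) < w(x_i)` forces `u(y_i) > 0`: every larger generator is divisible by `u · x_i` for such
an `i`. Conversely, if `u(y_i) > 0` then some summand of `u` omits `i`; adding `i` to that cover
yields the generator `u · x_i / y_i >_lex u`. Hence the colon ideal is `(x_i | u(y_i) > 0)`.
-/

/-- A vertex cover: a set of vertices meeting every edge. -/
def IsVertexCover {V : Type*} (G : SimpleGraph V) (C : Set V) : Prop :=
  ∀ ⦃v w : V⦄, G.Adj v w → v ∈ C ∨ w ∈ C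

/-- A minimal vertex cover: no proper subset is a vertex cover. -/
def IsMinimalVertexCover {V : Type*} (G : SimpleGraph V) (C : Set V) : Prop :=
  IsVertexCover G C ∧ ∀ D : Set V, D ⊂ C → ¬ IsVertexCover G D

/-- An independent set: pairwise non-adjacent vertices. -/
def IsIndepSet {V : Type*} (G : SimpleGraph V) (S : Set V) : Prop :=
  ∀ ⦃v : V⦄, v ∈ S → ∀ ⦃w : V⦄, w ∈ S → ¬ G.Adj v w

/-- A maximal independent set: no proper superset is independent. -/
def IsMaximalIndepSet {V : Type*} (G : SimpleGraph V) (S : Set V) : Prop :=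
  IsIndepSet G S ∧ ∀ T : Set V, IsIndepSet G T → S ⊆ T → S = T

/-- The cover ideal of a graph: the monomial ideal generated by the products of the
variables over the minimal vertex covers of G. -/
noncomputable def coverIdeal (K : Type*) [Field K] {V : Type*} [DecidableEq V]
    (G : SimpleGraph V) : Ideal (MvPolynomial V K) :=
  Ideal.span {m | ∃ C : Finset V, IsMinimalVertexCover G ↑C ∧
    m = ∏ v ∈ C, MvPolynomial.X v}

/-- `u` is (the exponent vector of) a minimal monomial generator of the monomial
ideal `I`: the monomial `X^u` lies in `I` and no proper divisor of it lies in `I`. -/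
def IsMinimalGen {K : Type*} [Field K] {V : Type*}
    (I : Ideal (MvPolynomial V K)) (u : V →₀ ℕ) : Prop :=
  MvPolynomial.monomial u (1 : K) ∈ I ∧
    ∀ v : V →₀ ℕ, v ≤ u → MvPolynomial.monomial v (1 : K) ∈ I → v = u

/-- The whisker graph `H*` of a graph `H` on `{x_1,…,x_n}`: vertices `x_i = Sum.inl i`
and `y_i = Sum.inr i`, edges those of `H` together with the whiskers `x_i y_i`. -/
def whisker {n : ℕ} (H : SimpleGraph (Fin n)) : SimpleGraph (Fin n ⊕ Fin n) :=
  SimpleGraph.fromRel (fun v w =>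
    (∃ i j : Fin n, v = Sum.inl i ∧ w = Sum.inl j ∧ H.Adj i j) ∨
    (∃ i : Fin n, v = Sum.inl i ∧ w = Sum.inr i))

/-- The rank of a variable in the order x_1 > y_1 > x_2 > y_2 > ⋯ > x_n > y_n
(smaller rank = larger variable). -/
def vrank {n : ℕ} : (Fin n ⊕ Fin n) → ℕ :=
  Sum.elim (fun i => 2 * (i : ℕ)) (fun i => 2 * (i : ℕ) + 1)

/-- u >_lex v with respect to the variable order x_1 > y_1 > ⋯ > x_n > y_n. -/
def lexGT {n : ℕ} (u v : (Fin n ⊕ Fin n) →₀ ℕ) : Prop :=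
  ∃ p : Fin n ⊕ Fin n, v p < u p ∧ ∀ q : Fin n ⊕ Fin n, vrank q < vrank p → u q = v q


open MvPolynomial Finsupp
open scoped Pointwise

theorem Finsupp.eq_of_le_of_degree_eq {σ : Type*} {w u : σ →₀ ℕ} (hle : w ≤ u)
    (hdeg : degree w = degree u) : w = u := by
  obtain ⟨c, rfl⟩ := exists_add_of_le hle
  rw [map_add, left_eq_add, degree_eq_zero_iff] at hdeg
  rw [hdeg, add_zero]

theorem Finsupp.exists_add_single_eq_of_mem_nsmul {ι : Type*} {S : Set (ι →₀ ℕ)} {x y : ι}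
    (hS : ∀ b ∈ S, 0 < b y → ∃ b' ∈ S, b' + single y 1 = b + single x 1)
    {N : ℕ} {u : ι →₀ ℕ} (hu : u ∈ N • S) (huy : 0 < u y) :
    ∃ u' ∈ N • S, u' + single y 1 = u + single x 1 := by
  induction N generalizing u with
  | zero => simp_all
  | succ N ih =>
    rw [succ_nsmul] at hu ⊢
    obtain ⟨a, ha, b, hb, rfl⟩ := hu
    by_cases hby : 0 < b y
    · obtain ⟨b', hb', hbb'⟩ := hS b hb hby
      exact ⟨a + b', Set.add_mem_add ha hb', by rw [add_assoc, hbb', add_assoc]⟩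
    · obtain ⟨a', ha', haa'⟩ := ih ha (by simp at hby huy; omega)
      exact ⟨a' + b, Set.add_mem_add ha' hb, by rw [add_right_comm, haa', add_right_comm]⟩

namespace MvPolynomial

variable {σ R : Type*} [CommSemiring R]

theorem monomial_one_mem_ideal_span_monomial_image_iff [Nontrivial R] {S : Set (σ →₀ ℕ)}
    {v : σ →₀ ℕ} :
    monomial v (1 : R) ∈ Ideal.span ((monomial · 1) '' S) ↔ ∃ w ∈ S, w ≤ v := by
  classical
  simp [mem_ideal_span_monomial_image, support_monomial]

theorem ideal_span_monomial_image_pow (S : Set (σ →₀ ℕ)) (N : ℕ) :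
    Ideal.span ((monomial · (1 : R)) '' S) ^ N = Ideal.span ((monomial · 1) '' (N • S)) := by
  induction N with
  | zero => simp [Ideal.one_eq_top]
  | succ N ih =>
    rw [pow_succ, ih, Ideal.span_mul_span', succ_nsmul]
    congr 1
    ext m
    simp only [Set.mem_mul, Set.mem_add, Set.mem_image]
    constructor
    · rintro ⟨_, ⟨a, ha, rfl⟩, _, ⟨b, hb, rfl⟩, rfl⟩
      exact ⟨a + b, ⟨a, ha, b, hb, rfl⟩, by rw [monomial_mul, one_mul]⟩
    · rintro ⟨_, ⟨a, ha, b, hb, rfl⟩, rfl⟩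
      exact ⟨_, ⟨a, ha, rfl⟩, _, ⟨b, hb, rfl⟩, by rw [monomial_mul, one_mul]⟩

theorem isMinimalGen_ideal_span_monomial_image_iff {K : Type*} [Field K] {S : Set (σ →₀ ℕ)}
    {d : ℕ} (hS : ∀ w ∈ S, degree w = d) {u : σ →₀ ℕ} :
    IsMinimalGen (Ideal.span ((monomial · (1 : K)) '' S)) u ↔ u ∈ S := by
  simp only [IsMinimalGen, monomial_one_mem_ideal_span_monomial_image_iff]
  constructor
  · rintro ⟨⟨w, hw, hwu⟩, hmin⟩
    rwa [← hmin w hwu ⟨w, hw, le_rfl⟩]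
  · refine fun hu => ⟨⟨u, hu, le_rfl⟩, fun v hvu ⟨w, hw, hwv⟩ => le_antisymm hvu ?_⟩
    rwa [← eq_of_le_of_degree_eq (hwv.trans hvu) (by rw [hS w hw, hS u hu])]

theorem colon_ideal_span_monomial_image_eq_span_X {S : Set (σ →₀ ℕ)} {u : σ →₀ ℕ}
    {T : Set σ} (hS : ∀ w ∈ S, ∃ t ∈ T, u t < w t)
    (hT : ∀ t ∈ T, ∃ w ∈ S, w ≤ u + single t 1) :
    (Ideal.span ((monomial · (1 : R)) '' S)).colon (Ideal.span {monomial u (1 : R)})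
      = Ideal.span (X '' T) := by
  apply le_antisymm
  · intro f hf
    rw [Ideal.mem_colon_span_singleton, mem_ideal_span_monomial_image] at hf
    rw [mem_ideal_span_X_image]
    intro m hm
    have hmu : m + u ∈ (f * monomial u 1).support := by
      rwa [mem_support_iff, coeff_mul_monomial, mul_one, ← mem_support_iff]
    obtain ⟨w, hw, hwle⟩ := hf _ hmu
    obtain ⟨t, ht, hlt⟩ := hS w hw
    have hwt : w t ≤ m t + u t := hwle t
    exact ⟨t, ht, by omega⟩
  · rw [Ideal.span_le]
    rintro _ ⟨t, ht, rfl⟩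
    rw [SetLike.mem_coe, Ideal.mem_colon_span_singleton, mem_ideal_span_monomial_image]
    intro m hm
    rw [X, monomial_mul, one_mul] at hm
    rw [Finset.mem_singleton.mp (support_monomial_subset hm), add_comm]
    exact hT t ht

end MvPolynomial

section Whisker

variable {n : ℕ} {H : SimpleGraph (Fin n)}

theorem isVertexCover_whisker_iff {C : Set (Fin n ⊕ Fin n)} :
    IsVertexCover (whisker H) C ↔
      IsVertexCover H (Sum.inl ⁻¹' C) ∧ ∀ i, Sum.inl i ∈ C ∨ Sum.inr i ∈ C := by
  refine ⟨fun h => ⟨fun i j hij => h ?_, fun i => h ?_⟩, ?_⟩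
  · simp [whisker, hij.ne, hij]
  · simp [whisker]
  · rintro ⟨hH, hC⟩ v w hvw
    simp only [whisker, SimpleGraph.fromRel_adj] at hvw
    obtain ⟨-, (⟨i, j, rfl, rfl, hij⟩ | ⟨i, rfl, rfl⟩) |
      (⟨i, j, rfl, rfl, hij⟩ | ⟨i, rfl, rfl⟩)⟩ := hvw
    · exact hH hij
    · exact hC i
    · exact (hH hij).symm
    · exact (hC i).symm

def whiskerCover (A : Finset (Fin n)) : Finset (Fin n ⊕ Fin n) :=
  A.disjSum Aᶜ

@[simp]
theorem inl_mem_whiskerCover {A : Finset (Fin n)} {i : Fin n} :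
    Sum.inl i ∈ whiskerCover A ↔ i ∈ A := by
  simp [whiskerCover]

@[simp]
theorem inr_mem_whiskerCover {A : Finset (Fin n)} {i : Fin n} :
    Sum.inr i ∈ whiskerCover A ↔ i ∉ A := by
  simp [whiskerCover]

theorem isMinimalVertexCover_whisker_iff {C : Finset (Fin n ⊕ Fin n)} :
    IsMinimalVertexCover (whisker H) C ↔
      ∃ A : Finset (Fin n), IsVertexCover H (A : Set (Fin n)) ∧ C = whiskerCover A := by
  constructor
  · rintro ⟨hcov, hmin⟩
    obtain ⟨hH, hC⟩ := isVertexCover_whisker_iff.mp hcov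
    refine ⟨Finset.univ.filter (Sum.inl · ∈ C), by simpa [Set.preimage] using hH, ?_⟩
    ext (i | i)
    · simp
    · simp only [inr_mem_whiskerCover, Finset.mem_filter, Finset.mem_univ, true_and]
      refine ⟨fun hy hx => hmin (↑C \ {Sum.inr i}) ?_ ?_, fun hx => (hC i).resolve_left hx⟩
      · exact Set.sdiff_singleton_ssubset.mpr hy
      · refine isVertexCover_whisker_iff.mpr ⟨by simpa [Set.preimage] using hH, fun j => ?_⟩
        by_cases hji : j = i
        · exact Or.inl (by simpa [hji] using hx)
        · simpa [hji] using hC j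
  · rintro ⟨A, hA, rfl⟩
    have hcov : IsVertexCover (whisker H) ↑(whiskerCover A) :=
      isVertexCover_whisker_iff.mpr ⟨by simpa [Set.preimage] using hA, fun i => by
        by_cases hi : i ∈ A <;> simp [hi]⟩
    refine ⟨hcov, fun D hD hDcov => hD.2 fun v hv => ?_⟩
    have hDsub : ∀ v ∈ D, v ∈ whiskerCover A := fun _ hv => hD.1 hv
    obtain ⟨-, hDC⟩ := isVertexCover_whisker_iff.mp hDcov
    -- `D` contains one of `x_i, y_i`, and `whiskerCover A` contains exactly one of them.
    rcases v with i | i <;> rcases hDC i with h | h <;> simp_all [hDsub _ h]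

noncomputable def whiskerCoverExp (A : Finset (Fin n)) : (Fin n ⊕ Fin n) →₀ ℕ :=
  ∑ v ∈ whiskerCover A, single v 1

@[simp]
theorem whiskerCoverExp_inl (A : Finset (Fin n)) (i : Fin n) :
    whiskerCoverExp A (Sum.inl i) = if i ∈ A then 1 else 0 := by
  simp [whiskerCoverExp, Finset.sum_apply', single_apply]

@[simp]
theorem whiskerCoverExp_inr (A : Finset (Fin n)) (i : Fin n) :
    whiskerCoverExp A (Sum.inr i) = if i ∈ A then 0 else 1 := by
  by_cases hi : i ∈ A <;> simp [whiskerCoverExp, Finset.sum_apply', single_apply, hi]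

theorem whiskerCoverExp_insert {A : Finset (Fin n)} {i : Fin n} (hi : i ∉ A) :
    whiskerCoverExp (insert i A) + single (Sum.inr i) 1
      = whiskerCoverExp A + single (Sum.inl i) 1 := by
  ext (j | j) <;> obtain rfl | hji := eq_or_ne j i <;> simp [*]

variable (H) in
def whiskerCoverExps : Set ((Fin n ⊕ Fin n) →₀ ℕ) :=
  whiskerCoverExp '' {A | IsVertexCover H (A : Set (Fin n))}

theorem coverIdeal_whisker (K : Type*) [Field K] :
    coverIdeal K (whisker H) = Ideal.span ((monomial · (1 : K)) '' whiskerCoverExps H) := by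
  rw [coverIdeal, whiskerCoverExps, Set.image_image]
  congr 1
  ext m
  simp only [isMinimalVertexCover_whisker_iff, Set.mem_ofPred_eq, Set.mem_image]
  constructor
  · rintro ⟨_, ⟨A, hA, rfl⟩, rfl⟩
    exact ⟨A, hA, (monomial_sum_one _ _).trans (by simp [X])⟩
  · rintro ⟨A, hA, rfl⟩
    exact ⟨_, ⟨A, hA, rfl⟩, (monomial_sum_one _ _).trans (by simp [X])⟩

theorem inl_add_inr_of_mem_nsmul_whiskerCoverExps {N : ℕ} {w : (Fin n ⊕ Fin n) →₀ ℕ}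
    (hw : w ∈ N • whiskerCoverExps H) (i : Fin n) : w (Sum.inl i) + w (Sum.inr i) = N := by
  induction N generalizing w with
  | zero => simp_all
  | succ N ih =>
    rw [succ_nsmul] at hw
    obtain ⟨a, ha, _, ⟨A, -, rfl⟩, rfl⟩ := hw
    have := ih ha
    by_cases hi : i ∈ A <;> simp [hi] <;> omega

theorem degree_of_mem_nsmul_whiskerCoverExps {N : ℕ} {w : (Fin n ⊕ Fin n) →₀ ℕ}
    (hw : w ∈ N • whiskerCoverExps H) : degree w = n * N := by
  simp [degree_eq_sum, ← Finset.sum_add_distrib,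
    inl_add_inr_of_mem_nsmul_whiskerCoverExps hw]

theorem isMinimalGen_coverIdeal_whisker_pow_iff {K : Type*} [Field K] {N : ℕ}
    {u : (Fin n ⊕ Fin n) →₀ ℕ} :
    IsMinimalGen (coverIdeal K (whisker H) ^ N) u ↔ u ∈ N • whiskerCoverExps H := by
  rw [coverIdeal_whisker, ideal_span_monomial_image_pow]
  exact isMinimalGen_ideal_span_monomial_image_iff
    fun _ => degree_of_mem_nsmul_whiskerCoverExps

theorem exists_add_single_eq_whiskerCoverExps {i : Fin n} :
    ∀ b ∈ whiskerCoverExps H, 0 < b (Sum.inr i) →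
      ∃ b' ∈ whiskerCoverExps H, b' + single (Sum.inr i) 1 = b + single (Sum.inl i) 1 := by
  rintro _ ⟨A, hA, rfl⟩ hi
  have hiA : i ∉ A := fun h => by simp [h] at hi
  refine ⟨_, ⟨insert i A, fun a b hab => ?_, rfl⟩, whiskerCoverExp_insert hiA⟩
  exact (hA hab).imp (by simp_all) (by simp_all)

end Whisker

section Lex

variable {n : ℕ}

theorem exists_inr_pos_of_lexGT {N : ℕ} {w u : (Fin n ⊕ Fin n) →₀ ℕ}
    (hw : ∀ i, w (Sum.inl i) + w (Sum.inr i) = N) (hu : ∀ i, u (Sum.inl i) + u (Sum.inr i) = N)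
    (h : lexGT w u) : ∃ i, 0 < u (Sum.inr i) ∧ u (Sum.inl i) < w (Sum.inl i) := by
  obtain ⟨i | i, hlt, heq⟩ := h
  · exact ⟨i, by have := hw i; have := hu i; omega, hlt⟩
  · -- `x_i` precedes `y_i`, so `w` and `u` agree at `x_i`, hence also at `y_i`.
    have := heq (Sum.inl i) (by simp [vrank])
    have := hw i; have := hu i
    omega

theorem lexGT_of_add_single_inr_eq {u u' : (Fin n ⊕ Fin n) →₀ ℕ} {i : Fin n}
    (h : u' + single (Sum.inr i) 1 = u + single (Sum.inl i) 1) : lexGT u' u := by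
  have hq (q : Fin n ⊕ Fin n) := DFunLike.congr_fun h q
  refine ⟨Sum.inl i, by have := hq (Sum.inl i); simp at this; omega, fun q hq' => ?_⟩
  have hne : Sum.inl i ≠ q ∧ Sum.inr i ≠ q := by
    constructor <;> rintro rfl <;> simp [vrank] at hq'
  simpa [single_apply, hne] using hq q

end Lex

theorem stmt_19_general {n : ℕ} (K : Type*) [Field K] (H : SimpleGraph (Fin n))
    (N : ℕ)
    (u : (Fin n ⊕ Fin n) →₀ ℕ)
    (hu : IsMinimalGen ((coverIdeal K (whisker H)) ^ N) u) :
    ∃ s : Finset (Fin n),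
      Submodule.colon
        (Ideal.span {m | ∃ w : (Fin n ⊕ Fin n) →₀ ℕ,
          IsMinimalGen ((coverIdeal K (whisker H)) ^ N) w ∧ lexGT w u ∧
          m = MvPolynomial.monomial w (1 : K)})
        (Ideal.span {MvPolynomial.monomial u (1 : K)})
      = Ideal.span ((fun i : Fin n => MvPolynomial.X (Sum.inl i)) '' ↑s) := by
  have huS := isMinimalGen_coverIdeal_whisker_pow_iff.mp hu
  have hL : {m | ∃ w, IsMinimalGen ((coverIdeal K (whisker H)) ^ N) w ∧ lexGT w u ∧
      m = monomial w (1 : K)} =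
        (monomial · 1) '' {w | w ∈ N • whiskerCoverExps H ∧ lexGT w u} := by
    ext
    simp [isMinimalGen_coverIdeal_whisker_pow_iff, and_assoc, eq_comm]
  refine ⟨Finset.univ.filter (fun i => 0 < u (Sum.inr i)), ?_⟩
  rw [hL, ← Set.image_image X Sum.inl]
  refine colon_ideal_span_monomial_image_eq_span_X ?_ ?_
  · rintro w ⟨hw, hlex⟩
    obtain ⟨i, hi, hlt⟩ := exists_inr_pos_of_lexGT
      (inl_add_inr_of_mem_nsmul_whiskerCoverExps hw)
      (inl_add_inr_of_mem_nsmul_whiskerCoverExps huS) hlex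
    exact ⟨Sum.inl i, ⟨i, by simpa using hi, rfl⟩, hlt⟩
  · rintro _ ⟨i, hi, rfl⟩
    obtain ⟨u', hu', h⟩ := exists_add_single_eq_of_mem_nsmul
      exists_add_single_eq_whiskerCoverExps huS (by simpa using hi)
    exact ⟨u', ⟨hu', lexGT_of_add_single_inr_eq h⟩, h ▸ le_self_add⟩

/-- Corollary 4.6(a): for every generator u of J(G)^N, the colon ideal of the span of
the lexicographically larger generators by u is generated by a subset of {x_1,…,x_n};
in particular J(G)^N has linear quotients. -/
theorem stmt_19 {n : ℕ} (K : Type*) [Field K] (H : SimpleGraph (Fin n))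
    (N : ℕ) (hN : 1 ≤ N)
    (u : (Fin n ⊕ Fin n) →₀ ℕ)
    (hu : IsMinimalGen ((coverIdeal K (whisker H)) ^ N) u) :
    ∃ s : Finset (Fin n),
      Submodule.colon
        (Ideal.span {m | ∃ w : (Fin n ⊕ Fin n) →₀ ℕ,
          IsMinimalGen ((coverIdeal K (whisker H)) ^ N) w ∧ lexGT w u ∧
          m = MvPolynomial.monomial w (1 : K)})
        (Ideal.span {MvPolynomial.monomial u (1 : K)})
      = Ideal.span ((fun i : Fin n => MvPolynomial.X (Sum.inl i)) '' ↑s) :=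
  stmt_19_general K H N u hu
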